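/- Under Assumption A, there exist τ₀ > 0 and Q > 0, depending only on d, k, L, β, γ, ‖x₀‖ and T, such that for every N ∈ ℕ with τ = T/N ≤ τ₀, the iterates of the discrete HiSD scheme satisfy, for all 1 ≤ i ≤ k and 1 ≤ n ≤ N, ‖τ γ Σ_{j=1}^{i−1} (v_{i,n−1}ᵀ v_{j,n}) (v_{i,n−1}ᵀ J(x_{n−1}) v_{i,n−1}) v_{j,n}‖ ≤ Q τ². -/

import Mathlib

/-!
Gram–Schmidt keeps every frame `v n` orthonormal, so the update of `x` is `β` times a reflection
of `F (x n)`; with the linear growth of `F` this gives `1 + ‖x n‖ ≤ exp (β L T) (1 + ‖x₀‖)`, hence a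
uniform bound on `‖J (x n)‖`. Each `vt = v n i + (τ γ) J (x n) (v n i)` is then within `τ γ ‖J‖`
of `v n i`, and since normalization at most doubles the distance to a unit vector, induction
along the Gram–Schmidt order gives `‖v (n+1) j - v n j‖ = O(τ)`. As `v n i ⊥ v n j`, every coefficient
`⟪v n i, v (n+1) j⟫` is `O(τ)`, and the prefactor `τ γ` supplies the second power of `τ`.
-/

open scoped RealInnerProductSpace

open Finset Real

theorem le_mul_one_add_pow_of_le_add_mul_sum {δ : ℕ → ℝ} {a b : ℝ} {m : ℕ} (hb : 0 ≤ b)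
    (h : ∀ i < m, δ i ≤ a + b * ∑ l ∈ range i, δ l) {i : ℕ} (hi : i < m) :
    δ i ≤ a * (1 + b) ^ i := by
  suffices H : ∀ i ≤ m, a + b * ∑ l ∈ range i, δ l ≤ a * (1 + b) ^ i from
    (h i hi).trans (H i hi.le)
  intro i hi
  induction i with
  | zero => simp
  | succ i ih =>
    have hδ := mul_le_mul_of_nonneg_left (h i (by omega)) hb
    have hP := mul_le_mul_of_nonneg_left (ih (by omega)) (by linarith : (0 : ℝ) ≤ 1 + b)
    rw [sum_range_succ, pow_succ]
    linarith

theorem le_exp_mul_of_le_one_add_mul {u : ℕ → ℝ} {c : ℝ} {N : ℕ} (hc : -1 ≤ c) (hu₀ : 0 ≤ u 0)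
    (h : ∀ n < N, u (n + 1) ≤ (1 + c) * u n) {n : ℕ} (hn : n ≤ N) :
    u n ≤ exp (c * n) * u 0 := by
  induction n with
  | zero => simp
  | succ n ih =>
    calc u (n + 1) ≤ (1 + c) * u n := h n hn
      _ ≤ (1 + c) * (exp (c * n) * u 0) :=
        mul_le_mul_of_nonneg_left (ih (by omega)) (by linarith)
      _ ≤ exp c * (exp (c * n) * u 0) := by
        have := add_one_le_exp c
        gcongr
        linarith
      _ = exp (c * ↑(n + 1)) * u 0 := by
        rw [Nat.cast_succ, mul_add_one, exp_add]; ring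

section InnerProductSpace

variable {E : Type*} [NormedAddCommGroup E] [InnerProductSpace ℝ E]

theorem norm_inv_norm_smul_sub_le {u : E} (hu : ‖u‖ = 1) (y : E) :
    ‖‖y‖⁻¹ • y - u‖ ≤ 2 * ‖y - u‖ := by
  have h : ‖‖y‖⁻¹ • y - y‖ ≤ ‖y - u‖ := by
    rcases eq_or_ne y 0 with rfl | hy
    · simp
    calc ‖‖y‖⁻¹ • y - y‖ = |(‖y‖⁻¹ - 1) * ‖y‖| := by
          rw [abs_mul, abs_norm, ← Real.norm_eq_abs, ← norm_smul, sub_smul, one_smul]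
      _ = |‖u‖ - ‖y‖| := by rw [sub_mul, inv_mul_cancel₀ (norm_ne_zero_iff.2 hy), one_mul, hu]
      _ ≤ ‖u - y‖ := abs_norm_sub_norm_le u y
      _ = ‖y - u‖ := norm_sub_rev u y
  calc ‖‖y‖⁻¹ • y - u‖ ≤ ‖‖y‖⁻¹ • y - y‖ + ‖y - u‖ := norm_sub_le_norm_sub_add_norm_sub _ _ _
    _ ≤ 2 * ‖y - u‖ := by linarith

theorem abs_inner_le_norm_sub_add_norm_sub {a c y w : E} (ha : ‖a‖ = 1) (hw : ‖w‖ = 1)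
    (hac : ⟪a, c⟫ = 0) : |⟪y, w⟫| ≤ ‖y - a‖ + ‖w - c‖ := by
  have hsplit : ⟪y, w⟫ = ⟪y - a, w⟫ + ⟪a, w - c⟫ := by
    rw [inner_sub_left, inner_sub_right, hac]; ring
  calc |⟪y, w⟫| ≤ |⟪y - a, w⟫| + |⟪a, w - c⟫| := hsplit ▸ abs_add_le _ _
    _ ≤ ‖y - a‖ * ‖w‖ + ‖a‖ * ‖w - c‖ :=
      add_le_add (abs_real_inner_le_norm _ _) (abs_real_inner_le_norm _ _)
    _ = ‖y - a‖ + ‖w - c‖ := by rw [ha, hw, mul_one, one_mul]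

theorem Orthonormal.norm_sub_two_smul_sum_inner_smul {ι : Type*} [Fintype ι] {v : ι → E}
    (hv : Orthonormal ℝ v) (y : E) : ‖y - (2 : ℝ) • ∑ j, ⟪v j, y⟫ • v j‖ = ‖y‖ := by
  set p := ∑ j, ⟪v j, y⟫ • v j
  have hpp : ⟪p, p⟫ = ∑ j, ⟪v j, y⟫ * ⟪v j, y⟫ := by
    simp only [p, hv.inner_sum, conj_trivial]
  have hyp : ⟪y, p⟫ = ∑ j, ⟪v j, y⟫ * ⟪v j, y⟫ := by
    simp only [p, inner_sum, real_inner_smul_right, real_inner_comm y]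
  rw [← sq_eq_sq₀ (norm_nonneg _) (norm_nonneg _), ← real_inner_self_eq_norm_sq,
    ← real_inner_self_eq_norm_sq]
  simp only [inner_sub_left, inner_sub_right, real_inner_smul_left, real_inner_smul_right,
    real_inner_comm y p, hpp, hyp]
  ring

variable {k : ℕ}

def IsGramSchmidtNormed (v w : Fin k → E) : Prop :=
  ∀ i, let y := v i - ∑ j ∈ Iio i, ⟪v i, w j⟫ • w j
    y ≠ 0 ∧ w i = ‖y‖⁻¹ • y

namespace IsGramSchmidtNormed

variable {v w : Fin k → E}

theorem orthonormal (h : IsGramSchmidtNormed v w) : Orthonormal ℝ w := by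
  have hnorm : ∀ i, ‖w i‖ = 1 := fun i => by
    obtain ⟨hy, hw⟩ := h i
    rw [hw, norm_smul, norm_inv, norm_norm, inv_mul_cancel₀ (norm_ne_zero_iff.2 hy)]
  have hlt : ∀ i, ∀ j < i, ⟪w i, w j⟫ = 0 := by
    intro i
    induction i using WellFoundedLT.induction with
    | _ i ih =>
      intro j hji
      have hpair : ∀ l ∈ Iio i, l ≠ j → ⟪⟪v i, w l⟫ • w l, w j⟫ = 0 := by
        intro l hl hlj
        rw [real_inner_smul_left]
        rcases hlj.lt_or_gt with hlj | hjl
        · rw [real_inner_comm (w j), ih j hji l hlj, mul_zero]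
        · rw [ih l (mem_Iio.1 hl) j hjl, mul_zero]
      rw [(h i).2, real_inner_smul_left, inner_sub_left, sum_inner,
        sum_eq_single_of_mem j (mem_Iio.2 hji) hpair, real_inner_smul_left,
        real_inner_self_eq_norm_sq, hnorm, one_pow, mul_one, sub_self, mul_zero]
  refine ⟨hnorm, fun i j hij => ?_⟩
  rcases hij.lt_or_gt with hij | hji
  · rw [real_inner_comm]; exact hlt j i hij
  · exact hlt i j hji

theorem norm_sub_le_add_sum (h : IsGramSchmidtNormed v w) {u : Fin k → E}
    (hu : Orthonormal ℝ u) {ε : ℝ} (hε : ∀ i, ‖v i - u i‖ ≤ ε) (i : Fin k) :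
    ‖w i - u i‖ ≤ 2 * (k + 1) * ε + 2 * ∑ l ∈ Iio i, ‖w l - u l‖ := by
  have hcoeff : ∀ l ∈ Iio i, ‖⟪v i, w l⟫ • w l‖ ≤ ε + ‖w l - u l‖ := by
    intro l hl
    rw [norm_smul, h.orthonormal.1 l, mul_one, Real.norm_eq_abs]
    exact (abs_inner_le_norm_sub_add_norm_sub (hu.1 i) (h.orthonormal.1 l)
      (hu.2 (mem_Iio.1 hl).ne')).trans (by linarith [hε i])
  have hy : ‖v i - ∑ l ∈ Iio i, ⟪v i, w l⟫ • w l - u i‖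
      ≤ ε + (i * ε + ∑ l ∈ Iio i, ‖w l - u l‖) :=
    calc _ = ‖(v i - u i) - ∑ l ∈ Iio i, ⟪v i, w l⟫ • w l‖ := by rw [sub_right_comm]
      _ ≤ ‖v i - u i‖ + ‖∑ l ∈ Iio i, ⟪v i, w l⟫ • w l‖ := _root_.norm_sub_le _ _
      _ ≤ ε + ∑ l ∈ Iio i, (ε + ‖w l - u l‖) :=
        add_le_add (hε i) ((norm_sum_le _ _).trans (sum_le_sum hcoeff))
      _ = ε + (i * ε + ∑ l ∈ Iio i, ‖w l - u l‖) := by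
        rw [sum_add_distrib, sum_const, Fin.card_Iio, nsmul_eq_mul]
  have hε₀ : 0 ≤ ε := (norm_nonneg _).trans (hε i)
  have hi : (i : ℝ) ≤ k := by exact_mod_cast i.isLt.le
  rw [(h i).2]
  refine (norm_inv_norm_smul_sub_le (hu.1 i) _).trans ?_
  nlinarith

theorem norm_sub_le (h : IsGramSchmidtNormed v w) {u : Fin k → E} (hu : Orthonormal ℝ u)
    {ε : ℝ} (hε : ∀ i, ‖v i - u i‖ ≤ ε) (i : Fin k) :
    ‖w i - u i‖ ≤ 2 * (k + 1) * 3 ^ k * ε := by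
  set δ : ℕ → ℝ := fun l => if hl : l < k then ‖w ⟨l, hl⟩ - u ⟨l, hl⟩‖ else 0
  have hδ : ∀ l : Fin k, δ l = ‖w l - u l‖ := fun l => dif_pos l.isLt
  have hsum : ∀ i : Fin k, ∑ l ∈ Iio i, ‖w l - u l‖ = ∑ l ∈ range i, δ l := fun i => by
    rw [← Nat.Iio_eq_range, ← Fin.map_valEmbedding_Iio, sum_map]
    exact sum_congr rfl fun l _ => (hδ l).symm
  have hgronwall := le_mul_one_add_pow_of_le_add_mul_sum (δ := δ) (m := k) zero_le_two
    (fun l hl => hδ ⟨l, hl⟩ ▸ hsum ⟨l, hl⟩ ▸ h.norm_sub_le_add_sum hu hε ⟨l, hl⟩) i.isLt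
  rw [hδ, show (1 : ℝ) + 2 = 3 by norm_num] at hgronwall
  calc _ ≤ 2 * (k + 1) * ε * 3 ^ (i : ℕ) := hgronwall
    _ ≤ 2 * (k + 1) * ε * 3 ^ k := by
      have := (norm_nonneg _).trans (hε i)
      gcongr
      · norm_num
      · exact i.isLt.le
    _ = 2 * (k + 1) * 3 ^ k * ε := by ring

end IsGramSchmidtNormed

theorem norm_sum_inner_mul_smul_le {u w : Fin k → E} (hu : Orthonormal ℝ u)
    (hw : ∀ j, ‖w j‖ = 1) {δ : ℝ} (hδ : ∀ j, ‖w j - u j‖ ≤ δ) (c : ℝ) (i : Fin k) :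
    ‖∑ j ∈ Iio i, (⟪u i, w j⟫ * c) • w j‖ ≤ k * (δ * |c|) := by
  have hterm : ∀ j ∈ Iio i, ‖(⟪u i, w j⟫ * c) • w j‖ ≤ δ * |c| := by
    intro j hj
    rw [norm_smul, hw j, mul_one, Real.norm_eq_abs, abs_mul]
    gcongr
    simpa using abs_inner_le_norm_sub_add_norm_sub (y := u i) (hu.1 i) (hw j)
      (hu.2 (mem_Iio.1 hj).ne') |>.trans (by simpa using hδ j)
  have hi : (i : ℝ) ≤ k := by exact_mod_cast i.isLt.le
  calc _ ≤ ∑ j ∈ Iio i, ‖(⟪u i, w j⟫ * c) • w j‖ := norm_sum_le _ _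
    _ ≤ i * (δ * |c|) := by simpa using sum_le_card_nsmul _ _ _ hterm
    _ ≤ k * (δ * |c|) := by
      have := (norm_nonneg _).trans (hδ i)
      gcongr

theorem one_add_norm_hisd_step_le {ι : Type*} [Fintype ι] {v : ι → E} (hv : Orthonormal ℝ v)
    {τ β L : ℝ} (hτ : 0 ≤ τ) (hβ : 0 ≤ β) {x y : E} (hy : ‖y‖ ≤ L * (1 + ‖x‖)) :
    1 + ‖x + τ • (β • (y - (2 : ℝ) • ∑ j, ⟪v j, y⟫ • v j))‖ ≤ (1 + τ * β * L) * (1 + ‖x‖) := by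
  have hstep : ‖τ • (β • (y - (2 : ℝ) • ∑ j, ⟪v j, y⟫ • v j))‖ ≤ τ * β * (L * (1 + ‖x‖)) := by
    rw [norm_smul, norm_smul, hv.norm_sub_two_smul_sum_inner_smul, Real.norm_eq_abs,
      Real.norm_eq_abs, abs_of_nonneg hτ, abs_of_nonneg hβ, ← mul_assoc]
    gcongr
  linarith [norm_add_le x (τ • (β • (y - (2 : ℝ) • ∑ j, ⟪v j, y⟫ • v j)))]

theorem hisd_one_add_norm_le {ι : Type*} [Fintype ι] {F : E → E} {L β τ T : ℝ} {N : ℕ}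
    (hgrow : ∀ x, ‖F x‖ ≤ L * (1 + ‖x‖)) (hL : 0 ≤ L) (hβ : 0 ≤ β) (hτ : 0 ≤ τ)
    (hτN : τ * N ≤ T) {x : ℕ → E} {v : ℕ → ι → E} (hv : ∀ n < N, Orthonormal ℝ (v n))
    (hx : ∀ n < N, x (n + 1) = x n + τ • (β • (F (x n) - (2 : ℝ) • ∑ j, ⟪v n j, F (x n)⟫ • v n j)))
    {n : ℕ} (hn : n ≤ N) : 1 + ‖x n‖ ≤ exp (β * L * T) * (1 + ‖x 0‖) := by
  calc 1 + ‖x n‖ ≤ exp (τ * β * L * n) * (1 + ‖x 0‖) :=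
        le_exp_mul_of_le_one_add_mul (u := fun n => 1 + ‖x n‖) (by nlinarith [mul_nonneg hτ hβ])
          (by positivity)
          (fun m hm => hx m hm ▸ one_add_norm_hisd_step_le (hv m hm) hτ hβ (hgrow _)) hn
    _ ≤ exp (β * L * T) * (1 + ‖x 0‖) := by
      have hτn : τ * n ≤ T := (mul_le_mul_of_nonneg_left (by exact_mod_cast hn) hτ).trans hτN
      have : τ * β * L * n ≤ β * L * T := by
        rw [show τ * β * L * n = β * L * (τ * n) by ring]
        exact mul_le_mul_of_nonneg_left hτn (by positivity)
      exact mul_le_mul_of_nonneg_right (exp_le_exp.2 this) (by positivity)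

end InnerProductSpace

theorem hisd_stmt7_general
    (d k : ℕ)
    (F : EuclideanSpace ℝ (Fin d) → EuclideanSpace ℝ (Fin d))
    (J : EuclideanSpace ℝ (Fin d) → (EuclideanSpace ℝ (Fin d) →L[ℝ] EuclideanSpace ℝ (Fin d)))
    (L : ℝ) (hL : 0 < L)
    (hLip : ∀ x₁ x₂ : EuclideanSpace ℝ (Fin d), ‖J x₂ - J x₁‖ + ‖F x₂ - F x₁‖ ≤ L * ‖x₂ - x₁‖)
    (hgrow : ∀ x : EuclideanSpace ℝ (Fin d), ‖F x‖ ≤ L * (1 + ‖x‖))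
    (β γ : ℝ) (hβ : 0 < β) (hγ : 0 < γ)
    (T : ℝ) (hT : 0 < T)
    (x₀ : EuclideanSpace ℝ (Fin d))
    (v₀ : Fin k → EuclideanSpace ℝ (Fin d))
    (hv₀ : ∀ i j : Fin k, ⟪v₀ i, v₀ j⟫ = if i = j then (1:ℝ) else 0) :
    ∃ τ₀ > (0:ℝ), ∃ Q > (0:ℝ), ∀ (N : ℕ) (τ : ℝ), 0 < N → τ = T / N → τ ≤ τ₀ →
      ∀ (x : ℕ → EuclideanSpace ℝ (Fin d)) (v : ℕ → Fin k → EuclideanSpace ℝ (Fin d)),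
        x 0 = x₀ → v 0 = v₀ →
        (∀ n < N, x (n+1) = x n + τ •
            (β • (F (x n) - (2:ℝ) • ∑ j, ⟪v n j, F (x n)⟫ • v n j))) →
        (∀ n < N, ∀ i : Fin k,
          let vt := v n i + (τ * γ) • J (x n) (v n i)
          let w := vt - ∑ j ∈ Finset.Iio i, ⟪vt, v (n+1) j⟫ • v (n+1) j
          w ≠ 0 ∧ v (n+1) i = ‖w‖⁻¹ • w) →
        ∀ n < N, ∀ i : Fin k,
          ‖(τ * γ) • ∑ j ∈ Finset.Iio i,
              (⟪v n i, v (n+1) j⟫ * ⟪v n i, J (x n) (v n i)⟫) • v (n+1) j‖ ≤ Q * τ^2 := by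
  set MJ := ‖J x₀‖ + L * (exp (β * L * T) * (1 + ‖x₀‖) + ‖x₀‖)
  have hMJ : 0 < MJ := by positivity
  refine ⟨1, one_pos, 2 * (k + 1) ^ 2 * 3 ^ k * (γ * MJ) ^ 2, by positivity, ?_⟩
  intro N τ hN hτ _ x v hx0 hv0 hx hv n hn i
  have hτ₀ : 0 < τ := hτ ▸ by positivity
  have horth : ∀ m ≤ N, Orthonormal ℝ (v m) := by
    rintro (_ | m) hm
    · exact hv0 ▸ orthonormal_iff_ite.2 hv₀
    · exact IsGramSchmidtNormed.orthonormal (hv m hm)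
  have hJ : ‖J (x n)‖ ≤ MJ := by
    have hτN : τ * N ≤ T := by rw [hτ, div_mul_cancel₀ T (Nat.cast_pos.2 hN).ne']
    have hxn := hisd_one_add_norm_le hgrow hL.le hβ.le hτ₀.le hτN
      (fun m hm => horth m hm.le) hx hn.le
    rw [hx0] at hxn
    calc ‖J (x n)‖ ≤ ‖J x₀‖ + ‖J (x n) - J x₀‖ := norm_le_insert' _ _
      _ ≤ ‖J x₀‖ + L * (‖x n‖ + ‖x₀‖) := by
        linarith [hLip x₀ (x n), norm_nonneg (F (x n) - F x₀),
          mul_le_mul_of_nonneg_left (norm_sub_le (x n) x₀) hL.le]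
      _ ≤ MJ := add_le_add le_rfl (mul_le_mul_of_nonneg_left (by linarith) hL.le)
  have hJv : ∀ j, ‖J (x n) (v n j)‖ ≤ MJ := fun j => by
    simpa [(horth n hn.le).1 j] using (J (x n)).le_of_opNorm_le hJ (v n j)
  have hε : ∀ j, ‖(v n j + (τ * γ) • J (x n) (v n j)) - v n j‖ ≤ τ * γ * MJ := fun j => by
    rw [add_sub_cancel_left, norm_smul, Real.norm_eq_abs, abs_of_pos (by positivity)]
    exact mul_le_mul_of_nonneg_left (hJv j) (by positivity)
  have hc : |⟪v n i, J (x n) (v n i)⟫| ≤ MJ :=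
    (abs_real_inner_le_norm _ _).trans (by rw [(horth n hn.le).1 i, one_mul]; exact hJv i)
  rw [norm_smul, Real.norm_eq_abs, abs_of_pos (by positivity)]
  calc τ * γ * _
        ≤ τ * γ * (k * (2 * (k + 1) * 3 ^ k * (τ * γ * MJ) * |⟪v n i, J (x n) (v n i)⟫|)) := by
        gcongr
        exact norm_sum_inner_mul_smul_le (horth n hn.le) (horth (n + 1) hn).1
          (IsGramSchmidtNormed.norm_sub_le (hv n hn) (horth n hn.le) hε) _ i
    _ ≤ τ * γ * ((k + 1) * (2 * (k + 1) * 3 ^ k * (τ * γ * MJ) * MJ)) := by gcongr; linarith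
    _ = 2 * (k + 1) ^ 2 * 3 ^ k * (γ * MJ) ^ 2 * τ ^ 2 := by ring

theorem hisd_stmt7
    (d k : ℕ) (hd : 1 ≤ d) (hk : 1 ≤ k) (hkd : k ≤ d)
    (F : EuclideanSpace ℝ (Fin d) → EuclideanSpace ℝ (Fin d))
    (J : EuclideanSpace ℝ (Fin d) → (EuclideanSpace ℝ (Fin d) →L[ℝ] EuclideanSpace ℝ (Fin d)))
    (hJsymm : ∀ x u w, ⟪J x u, w⟫ = ⟪u, J x w⟫)
    (L : ℝ) (hL : 0 < L)
    (hLip : ∀ x₁ x₂ : EuclideanSpace ℝ (Fin d), ‖J x₂ - J x₁‖ + ‖F x₂ - F x₁‖ ≤ L * ‖x₂ - x₁‖)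
    (hgrow : ∀ x : EuclideanSpace ℝ (Fin d), ‖F x‖ ≤ L * (1 + ‖x‖))
    (β γ : ℝ) (hβ : 0 < β) (hγ : 0 < γ)
    (T : ℝ) (hT : 0 < T)
    (x₀ : EuclideanSpace ℝ (Fin d))
    (v₀ : Fin k → EuclideanSpace ℝ (Fin d))
    (hv₀ : ∀ i j : Fin k, ⟪v₀ i, v₀ j⟫ = if i = j then (1:ℝ) else 0) :
    ∃ τ₀ > (0:ℝ), ∃ Q > (0:ℝ), ∀ (N : ℕ) (τ : ℝ), 0 < N → τ = T / N → τ ≤ τ₀ →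
      ∀ (x : ℕ → EuclideanSpace ℝ (Fin d)) (v : ℕ → Fin k → EuclideanSpace ℝ (Fin d)),
        x 0 = x₀ → v 0 = v₀ →
        (∀ n < N, x (n+1) = x n + τ •
            (β • (F (x n) - (2:ℝ) • ∑ j, ⟪v n j, F (x n)⟫ • v n j))) →
        (∀ n < N, ∀ i : Fin k,
          let vt := v n i + (τ * γ) • J (x n) (v n i)
          let w := vt - ∑ j ∈ Finset.Iio i, ⟪vt, v (n+1) j⟫ • v (n+1) j
          w ≠ 0 ∧ v (n+1) i = ‖w‖⁻¹ • w) →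
        ∀ n < N, ∀ i : Fin k,
          ‖(τ * γ) • ∑ j ∈ Finset.Iio i,
              (⟪v n i, v (n+1) j⟫ * ⟪v n i, J (x n) (v n i)⟫) • v (n+1) j‖ ≤ Q * τ^2 :=
  hisd_stmt7_general d k F J L hL hLip hgrow β γ hβ hγ T hT x₀ v₀ hv₀
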